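/- arXiv:2407.12169 — 4 statements merged into one kernel-verified Lean document; each statement's English description precedes it below -/
import Mathlib

section
/- Let k be a field with a non-Archimedean absolute value |·| such that dim_ℚ √|k*| = n is finite, and let l be a prime with gcd(l, char(k̃)) = 1 where k̃ is the residue field. Given finitely many elements a₁, …, a_s ∈ k*, there exist c₁, …, cₙ ∈ k* such that each aᵢ = uᵢ · (∏_{j=1}^n c_j^{μ_{ij}}) · bᵢ^l, where uᵢ is a unit of the valuation ring k°, bᵢ ∈ k*, and 0 ≤ μ_{ij} ≤ l−1 are integers. -/
open scoped NNReal

/-- The image under `Real.log` of the value group `|k*| ⊆ ℝ_{>0}` of a valued field. -/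
def logValueGroup (k : Type) [Field k] [Valued k ℝ≥0] : Set ℝ :=
  Real.log '' {r : ℝ | ∃ x : kˣ, ((Valued.v (x : k) : ℝ≥0) : ℝ) = r}

/-- `dim_ℚ √|k*|`, the rational rank of the value group of `k`, computed as the
ℚ-dimension of the ℚ-span of `log |k*|` (which equals the span of `log √|k*|`). -/
noncomputable def valRank (k : Type) [Field k] [Valued k ℝ≥0] : ℕ :=
  Module.finrank ℚ (Submodule.span ℚ (logValueGroup k))

/-- The valuation ring `k°` of a valued field. -/
noncomputable def valRing (k : Type) [Field k] [Valued k ℝ≥0] : ValuationSubring k :=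
  Valued.v.valuationSubring

/-- The residue field `k̃` of a valued field. -/
abbrev resF (k : Type) [Field k] [Valued k ℝ≥0] : Type :=
  IsLocalRing.ResidueField (valRing k)

/-! The numbers `log |aᵢ|` generate a finitely generated subgroup of `log |k*| ⊆ ℝ`. Being
torsion-free it is free, of rank at most `dim_ℚ √|k*| = n`, so it is generated by `n` elements
`log |cⱼ|` with `cⱼ` in the subgroup of `k*` generated by the `aᵢ`. Writing
`log |aᵢ| = ∑ⱼ zᵢⱼ log |cⱼ|` and dividing `zᵢⱼ = l qᵢⱼ + μᵢⱼ` with `0 ≤ μᵢⱼ < l`, the quotient of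
`aᵢ` by `∏ⱼ cⱼ^μᵢⱼ · (∏ⱼ cⱼ^qᵢⱼ)^l` has absolute value one. -/

open Submodule Set Module

theorem prod_zpow_eq_prod_pow_emod_mul_pow {ι G : Type*} [Fintype ι] [CommGroup G] {l : ℕ}
    (hl : l ≠ 0) (c : ι → G) (z : ι → ℤ) :
    ∏ j, c j ^ z j = (∏ j, c j ^ (z j % l).toNat) * (∏ j, c j ^ (z j / l)) ^ l := by
  rw [← Finset.prod_pow, ← Finset.prod_mul_distrib]
  refine Finset.prod_congr rfl fun j _ => ?_
  have hnonneg : 0 ≤ z j % l := Int.emod_nonneg _ (by exact_mod_cast hl)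
  rw [← zpow_natCast, Int.toNat_of_nonneg hnonneg, ← zpow_natCast, ← zpow_mul, ← zpow_add,
    Int.emod_add_ediv_mul]

theorem finrank_span_int_le_finrank_span_rat {V : Type*} [AddCommGroup V] [Module ℚ V]
    {S : Set V} (hS : S.Finite) : finrank ℤ (span ℤ S) ≤ finrank ℚ (span ℚ S) := by
  have : IsAddTorsionFree V := .of_module_rat V
  have : Module.Finite ℤ (span ℤ S) := .span_of_finite ℤ hS
  have : Module.Finite ℚ (span ℚ S) := .span_of_finite ℚ hS
  let b := Module.finBasis ℤ (span ℤ S)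
  have hliZ : LinearIndependent ℤ fun j => (b j : V) :=
    b.linearIndependent.map' _ (ker_subtype _)
  have hliQ : LinearIndependent ℚ fun j =>
      (⟨b j, span_le_restrictScalars ℤ ℚ S (b j).2⟩ : span ℚ S) :=
    ((LinearIndependent.iff_fractionRing ℤ ℚ).mp hliZ).of_comp (span ℚ S).subtype
  simpa using hliQ.fintype_card_le_finrank

theorem exists_fin_span_eq_of_finrank_le {R V : Type*} [Ring R] [StrongRankCondition R]
    [AddCommGroup V] [Module R V] (M : Submodule R V) [Module.Free R M] [Module.Finite R M] {n : ℕ}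
    (h : finrank R M ≤ n) : ∃ e : Fin n → V, span R (range e) = M := by
  let b := Module.finBasis R M
  let e : Fin n → V := Function.extend (Fin.castLE h) (fun j => (b j : V)) 0
  have he : ∀ j, e (Fin.castLE h j) = b j := (Fin.castLE_injective h).extend_apply _ _
  refine ⟨e, le_antisymm (span_le.2 ?_) ?_⟩
  · rintro _ ⟨j, rfl⟩
    by_cases hj : ∃ i, Fin.castLE h i = j
    · obtain ⟨i, rfl⟩ := hj
      exact he i ▸ (b i).2
    · rw [show e j = 0 from Function.extend_apply' _ _ _ hj]
      exact M.zero_mem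
  · calc M = (span R (range b)).map M.subtype := by rw [b.span_eq, map_subtype_top]
      _ = span R (range fun j => (b j : V)) := by rw [map_span, ← range_comp]; rfl
      _ ≤ span R (range e) := span_mono (range_subset_iff.2 fun j => ⟨_, he j⟩)

theorem exists_eq_mul_prod_pow_mul_pow {ι G V : Type*} [Finite ι] [CommGroup G] [AddCommGroup V]
    [Module ℚ V] (φ : Additive G →+ V) (a : ι → G) {n : ℕ}
    (hrank : finrank ℚ (span ℚ (range fun i => φ (.ofMul (a i)))) ≤ n) {l : ℕ} (hl : l ≠ 0) :
    ∃ c : Fin n → G, ∃ u b : ι → G, ∃ μ : ι → Fin n → ℕ,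
      (∀ i j, μ i j < l) ∧ (∀ i, φ (.ofMul (u i)) = 0) ∧
      ∀ i, a i = u i * (∏ j, c j ^ μ i j) * b i ^ l := by
  set x := fun i => φ (.ofMul (a i))
  have : IsAddTorsionFree V := .of_module_rat V
  have : Module.Finite ℤ (span ℤ (range x)) := .span_of_finite ℤ (finite_range x)
  obtain ⟨e, he⟩ := exists_fin_span_eq_of_finrank_le (span ℤ (range x))
    ((finrank_span_int_le_finrank_span_rat (finite_range x)).trans hrank)
  have hle : span ℤ (range x) ≤ LinearMap.range φ.toIntLinearMap :=
    span_le.2 (range_subset_iff.2 fun i => ⟨_, rfl⟩)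
  have hlift : ∀ j, ∃ c : G, φ (.ofMul c) = e j := by
    intro j
    obtain ⟨y, hy⟩ := hle (he ▸ subset_span ⟨j, rfl⟩ : e j ∈ span ℤ (range x))
    exact ⟨y.toMul, hy⟩
  choose c hc using hlift
  have hcoord : ∀ i, ∃ z : Fin n → ℤ, ∑ j, z j • e j = x i := fun i =>
    (mem_span_range_iff_exists_fun ℤ).1 (he ▸ subset_span ⟨i, rfl⟩)
  choose z hz using hcoord
  have hφ : ∀ i, φ (.ofMul (∏ j, c j ^ z i j)) = x i := fun i => by
    simp only [ofMul_prod, ofMul_zpow, map_sum, map_zsmul, hc, hz]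
  refine ⟨c, fun i => a i * (∏ j, c j ^ z i j)⁻¹, fun i => ∏ j, c j ^ (z i j / l),
    fun i j => (z i j % l).toNat, fun i j => ?_, fun i => ?_, fun i => ?_⟩
  · show (z i j % l).toNat < l
    have := Int.emod_lt_of_pos (z i j) (by omega : (0 : ℤ) < l)
    omega
  · rw [ofMul_mul, map_add, ofMul_inv, map_neg, hφ, add_neg_cancel]
  · rw [mul_assoc, ← prod_zpow_eq_prod_pow_emod_mul_pow hl, inv_mul_cancel_right]

noncomputable def logAbs (k : Type) [Field k] [Valued k ℝ≥0] : Additive kˣ →+ ℝ where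
  toFun x := Real.log (Valued.v (x.toMul : k) : ℝ≥0)
  map_zero' := by simp
  map_add' x y := by
    simp only [toMul_add, Units.val_mul, map_mul, NNReal.coe_mul]
    exact Real.log_mul (by simp) (by simp)

section logAbs

variable {k : Type} [Field k] [Valued k ℝ≥0]

theorem logAbs_ofMul_mem_logValueGroup (x : kˣ) : logAbs k (.ofMul x) ∈ logValueGroup k :=
  ⟨_, ⟨x, rfl⟩, rfl⟩

theorem logAbs_ofMul_eq_zero_iff (x : kˣ) : logAbs k (.ofMul x) = 0 ↔ Valued.v (x : k) = 1 := by
  have hpos : (0 : ℝ) < Valued.v (x : k) :=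
    NNReal.coe_pos.2 (pos_iff_ne_zero.2 ((Valuation.ne_zero_iff _).2 x.ne_zero))
  refine ⟨fun h => ?_, fun h => by simp [logAbs, h]⟩
  by_contra hne
  exact Real.log_ne_zero_of_pos_of_ne_one hpos (by exact_mod_cast hne) h

theorem finrank_span_logAbs_le_valRank [FiniteDimensional ℚ (span ℚ (logValueGroup k))]
    {ι : Type*} (a : ι → kˣ) :
    finrank ℚ (span ℚ (range fun i => logAbs k (.ofMul (a i)))) ≤ valRank k :=
  Submodule.finrank_mono <|
    span_mono (range_subset_iff.2 fun _ => logAbs_ofMul_mem_logValueGroup _)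

end logAbs

theorem stmt2_general (k : Type) [Field k] [Valued k ℝ≥0] (n : ℕ)
    (hfin : FiniteDimensional ℚ (Submodule.span ℚ (logValueGroup k)))
    (hn : valRank k = n)
    (l : ℕ) (hl : l.Prime)
    (s : ℕ) (a : Fin s → kˣ) :
    ∃ c : Fin n → kˣ, ∃ u b : Fin s → kˣ, ∃ μ : Fin s → Fin n → ℕ,
      (∀ i j, μ i j ≤ l - 1) ∧
      (∀ i, Valued.v ((u i : k)) = 1) ∧
      (∀ i, a i = u i * (∏ j, c j ^ (μ i j)) * (b i) ^ l) := by
  obtain ⟨c, u, b, μ, hμ, hu, ha⟩ :=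
    exists_eq_mul_prod_pow_mul_pow (logAbs k) a (hn ▸ finrank_span_logAbs_le_valRank a) hl.ne_zero
  exact ⟨c, u, b, μ, fun i j => Nat.le_sub_one_of_lt (hμ i j),
    fun i => (logAbs_ofMul_eq_zero_iff (u i)).1 (hu i), ha⟩

/-- Main Decomposition Lemma: let `k` be a non-Archimedean valued field
with `dim_ℚ √|k*| = n` finite and `l` a prime with `gcd(l, char k̃) = 1` (i.e. `char k̃ ≠ l`).
Given `a₁, …, a_s ∈ k*`, there exist `c₁, …, cₙ ∈ k*` such that each
`aᵢ = uᵢ · ∏ⱼ cⱼ^{μᵢⱼ} · bᵢ^l` with `uᵢ` a unit of `k°` (i.e. `|uᵢ| = 1`), `bᵢ ∈ k*`,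
and `0 ≤ μᵢⱼ ≤ l − 1`. -/
theorem stmt2 (k : Type) [Field k] [Valued k ℝ≥0] (n : ℕ)
    (hfin : FiniteDimensional ℚ (Submodule.span ℚ (logValueGroup k)))
    (hn : valRank k = n)
    (l : ℕ) (hl : l.Prime) (hchar : ringChar (resF k) ≠ l)
    (s : ℕ) (a : Fin s → kˣ) :
    ∃ c : Fin n → kˣ, ∃ u b : Fin s → kˣ, ∃ μ : Fin s → Fin n → ℕ,
      (∀ i j, μ i j ≤ l - 1) ∧
      (∀ i, Valued.v ((u i : k)) = 1) ∧
      (∀ i, a i = u i * (∏ j, c j ^ (μ i j)) * (b i) ^ l) :=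
  stmt2_general k n hfin hn l hl s a
end

section
/- Let k be a complete ultrametric field whose residue field k̃ has characteristic different from 2, and suppose dim_ℚ √|k*| = n is finite. Then u(k) ≤ 2^n · u(k̃), where u denotes the u-invariant: the maximal dimension of an anisotropic quadratic form over the field. -/
open scoped NNReal

/-- `u(K) ≤ m`: every quadratic form over `K` of dimension `> m` is isotropic. -/
def uInvLE (K : Type) [Field K] (m : ℝ) : Prop :=
  ∀ d : ℕ, (∃ q : QuadraticForm K (Fin d → K), q.Anisotropic) → (d : ℝ) ≤ m

/-!
Diagonalise an anisotropic form over `k` as `⟨w₁, …, w_N⟩`. Modulo twice the lattice spanned by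
the `log |wᵢ|`, which has rank at most `n`, these fall into at most `2ⁿ` classes. Inside one class,
rescaling the variables turns the weights into a common factor times units `uᵢ`, and `⟨uᵢ⟩` is
still anisotropic. So is its reduction to `k̃`: an isotropic residue vector lifts to a vector whose
value has absolute value `< 1`, and as `|2| = 1`, Newton's iteration for a square root converges in
the complete field `k` and corrects one coordinate into an isotropic vector over `k`. Hence each
class has at most `u(k̃)` members.
-/

open Filter Topology

namespace QuadraticMap

lemma Equivalent.anisotropic {R M M' N : Type*} [CommSemiring R] [AddCommMonoid M]
    [AddCommMonoid M'] [AddCommMonoid N] [Module R M] [Module R M'] [Module R N]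
    {Q : QuadraticMap R M N} {Q' : QuadraticMap R M' N} (h : Q.Equivalent Q')
    (hQ : Q.Anisotropic) : Q'.Anisotropic := by
  obtain ⟨e⟩ := h
  intro x hx
  simpa using congrArg e (hQ _ ((e.symm.map_app x).trans hx))

variable {R ι ι' : Type*} [Fintype ι] [Fintype ι']

lemma weightedSumSquares_update [CommRing R] [DecidableEq ι] (w x : ι → R) (j : ι) (y : R) :
    weightedSumSquares R w (Function.update x j y) =
      weightedSumSquares R w x + w j • (y * y - x j * x j) := by
  simp only [weightedSumSquares_apply, Fintype.sum_eq_add_sum_compl j, Function.update_self]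
  rw [Finset.sum_congr rfl fun i hi => by
    rw [Function.update_of_ne (by simpa using hi)]]
  simp only [smul_eq_mul]
  ring

lemma Anisotropic.weightedSumSquares_comp [CommSemiring R] {w : ι → R}
    (hw : (weightedSumSquares R w).Anisotropic) {e : ι' → ι} (he : Function.Injective e) :
    (weightedSumSquares R (w ∘ e)).Anisotropic := by
  classical
  intro x hx
  have hzero := hw (Function.extend e x 0) <| by
    rw [weightedSumSquares_apply] at hx ⊢
    rw [← hx]
    refine (Fintype.sum_of_injective e he _ _ (fun i hi => ?_) fun i => ?_).symm
    · simp [Function.extend_apply' _ _ _ hi]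
    · simp [he.extend_apply]
  funext i
  simpa [he.extend_apply] using congrFun hzero (e i)

lemma Anisotropic.of_weightedSumSquares_eq_mul_sq [Field R] {w u t : ι → R} {a : R}
    (ht : ∀ i, t i ≠ 0) (hw : ∀ i, w i = a * u i * t i ^ 2)
    (h : (weightedSumSquares R w).Anisotropic) : (weightedSumSquares R u).Anisotropic := by
  intro x hx
  have hzero := h (fun i => x i / t i) <| by
    rw [weightedSumSquares_apply] at hx ⊢
    have hterm : ∀ i, w i • (x i / t i * (x i / t i)) = a * (u i • (x i * x i)) := by
      intro i; rw [hw i, smul_eq_mul, smul_eq_mul]; field_simp [ht i]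
    rw [Finset.sum_congr rfl fun i _ => hterm i, ← Finset.mul_sum, hx, mul_zero]
  funext i
  simpa [ht i] using congrFun hzero i

end QuadraticMap

namespace uInvLE

variable {K : Type} [Field K] {m : ℝ}

lemma nonneg (h : uInvLE K m) : 0 ≤ m := by
  simpa using h 0 ⟨0, fun x _ => Subsingleton.elim x 0⟩

lemma card_le {ι : Type*} [Fintype ι] (h : uInvLE K m) {w : ι → K}
    (hw : (QuadraticMap.weightedSumSquares K w).Anisotropic) : (Fintype.card ι : ℝ) ≤ m :=
  h _ ⟨_, hw.weightedSumSquares_comp (Fintype.equivFin ι).symm.injective⟩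

end uInvLE

section Hensel

variable {K : Type*} [Field K]

instance Valued.nonarchimedeanAddGroup [Valued K ℝ≥0] : NonarchimedeanAddGroup K where
  is_nonarchimedean U hU := by
    obtain ⟨γ, hγ⟩ := Valued.mem_nhds_zero.mp hU
    exact ⟨⟨Valued.v.restrict.ltAddSubgroup γ, Valued.isOpen_ball K γ.1⟩, hγ⟩

lemma Valued.tendsto_zero_of_valuation_le [Valued K ℝ≥0] {f : ℕ → K} {ε : ℕ → ℝ≥0}
    (hε : Tendsto ε atTop (𝓝 0)) (hf : ∀ m, Valued.v (f m) ≤ ε m) :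
    Tendsto f atTop (𝓝 0) := by
  refine (Valued.hasBasis_nhds_zero K ℝ≥0).tendsto_right_iff.mpr fun γ _ => ?_
  filter_upwards [hε.eventually (gt_mem_nhds
    (MonoidWithZeroHom.ValueGroup₀.embedding_unit_pos γ))] with m hm
  rw [Valuation.restrict_lt_iff_lt_embedding]
  exact (hf m).trans_lt hm

def newtonSqrtStep (b x : K) : K := (x + b / x) / 2

lemma newtonSqrtStep_sub (b : K) {x : K} (hx : x ≠ 0) (h2 : (2 : K) ≠ 0) :
    newtonSqrtStep b x - x = -(x ^ 2 - b) / (2 * x) := by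
  unfold newtonSqrtStep; field_simp; ring

lemma newtonSqrtStep_sq_sub (b : K) {x : K} (hx : x ≠ 0) (h2 : (2 : K) ≠ 0) :
    newtonSqrtStep b x ^ 2 - b = ((x ^ 2 - b) / (2 * x)) ^ 2 := by
  unfold newtonSqrtStep; field_simp; ring

variable [Valued K ℝ≥0] {b : K}

lemma valuation_newtonSqrtStep (h2 : Valued.v (2 : K) = 1) {x : K} (hx : Valued.v x = 1) :
    Valued.v (newtonSqrtStep b x - x) = Valued.v (x ^ 2 - b) ∧
      Valued.v (newtonSqrtStep b x ^ 2 - b) = Valued.v (x ^ 2 - b) ^ 2 := by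
  have hx0 : x ≠ 0 := by rintro rfl; simp at hx
  have h20 : (2 : K) ≠ 0 := by rintro h; simp [h] at h2
  have h2x : Valued.v (2 * x) = 1 := by rw [map_mul, h2, hx, one_mul]
  rw [newtonSqrtStep_sub b hx0 h20, newtonSqrtStep_sq_sub b hx0 h20, map_div₀, map_pow, map_div₀,
    h2x, Valuation.map_neg]
  simp

lemma valuation_newtonSqrtStep_iterate (h2 : Valued.v (2 : K) = 1) {a : K} (ha : Valued.v a = 1)
    (hab : Valued.v (a ^ 2 - b) < 1) (m : ℕ) :
    Valued.v ((newtonSqrtStep b)^[m] a) = 1 ∧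
      Valued.v (((newtonSqrtStep b)^[m] a) ^ 2 - b) = Valued.v (a ^ 2 - b) ^ 2 ^ m := by
  induction m with
  | zero => simpa using ha
  | succ m ih =>
    obtain ⟨hx, hsq⟩ := ih
    set x := (newtonSqrtStep b)^[m] a
    obtain ⟨hstep, hstep_sq⟩ := valuation_newtonSqrtStep (b := b) h2 hx
    have hsmall : Valued.v (newtonSqrtStep b x - x) < Valued.v x := by
      rw [hstep, hsq, hx]; exact pow_lt_one₀ zero_le hab (by positivity)
    rw [Function.iterate_succ_apply', hstep_sq, hsq, ← pow_mul, ← pow_succ,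
      ← sub_add_cancel (newtonSqrtStep b x) x, Valuation.map_add_eq_of_lt_right _ hsmall, hx]
    exact ⟨rfl, rfl⟩

theorem Valued.exists_sq_eq_of_valuation_sq_sub_lt_one [CompleteSpace K]
    (h2 : Valued.v (2 : K) = 1) {a : K} (ha : Valued.v a = 1) (hab : Valued.v (a ^ 2 - b) < 1) :
    ∃ y, y ^ 2 = b := by
  set x : ℕ → K := fun m => (newtonSqrtStep b)^[m] a
  have hx := valuation_newtonSqrtStep_iterate h2 ha hab
  have hε : Tendsto (fun m => Valued.v (a ^ 2 - b) ^ 2 ^ m) atTop (𝓝 0) :=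
    (NNReal.tendsto_pow_atTop_nhds_zero_of_lt_one hab).comp
      (tendsto_pow_atTop_atTop_of_one_lt one_lt_two)
  have hsq : Tendsto (fun m => x m ^ 2 - b) atTop (𝓝 0) :=
    Valued.tendsto_zero_of_valuation_le hε fun m => (hx m).2.le
  have hdiff : Tendsto (fun m => x (m + 1) - x m) atTop (𝓝 0) := by
    refine Valued.tendsto_zero_of_valuation_le hε fun m => ?_
    simp only [x, Function.iterate_succ_apply']
    rw [(valuation_newtonSqrtStep h2 (hx m).1).1, (hx m).2]
  obtain ⟨y, hy⟩ := cauchySeq_tendsto_of_complete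
    (NonarchimedeanAddGroup.cauchySeq_of_tendsto_sub_nhds_zero hdiff)
  exact ⟨y, sub_eq_zero.mp (tendsto_nhds_unique ((hy.pow 2).sub_const b) hsq)⟩

end Hensel

section Residue

variable {k : Type} [Field k] [Valued k ℝ≥0]

lemma residue_eq_zero_iff_valuation_lt_one (x : valRing k) :
    IsLocalRing.residue (valRing k) x = 0 ↔ Valued.v (x : k) < 1 :=
  (IsLocalRing.residue_eq_zero_iff x).trans (Valuation.mem_maximalIdeal_iff _ _)

lemma valuation_eq_one_of_residue_ne_zero {x : valRing k}
    (hx : IsLocalRing.residue (valRing k) x ≠ 0) : Valued.v (x : k) = 1 :=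
  le_antisymm x.2 (not_lt.mp ((residue_eq_zero_iff_valuation_lt_one x).not.mp hx))

lemma valuation_two_eq_one (hchar : ringChar (resF k) ≠ 2) : Valued.v (2 : k) = 1 :=
  valuation_eq_one_of_residue_ne_zero (x := 2) (by rw [map_ofNat]; exact Ring.two_ne_zero hchar)

theorem anisotropic_residue_of_anisotropic [CompleteSpace k] (h2 : Valued.v (2 : k) = 1)
    {ι : Type*} [Fintype ι] {u : ι → k} (hu : ∀ i, Valued.v (u i) = 1)
    (h : (QuadraticMap.weightedSumSquares k u).Anisotropic) :
    (QuadraticMap.weightedSumSquares (resF k)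
      fun i => IsLocalRing.residue (valRing k) ⟨u i, (hu i).le⟩).Anisotropic := by
  classical
  intro x' hx'
  by_contra hne
  obtain ⟨j, hj⟩ := Function.ne_iff.mp hne
  choose X hX using fun i => IsLocalRing.residue_surjective (R := valRing k) (x' i)
  set T := QuadraticMap.weightedSumSquares k u fun i => (X i : k)
  have hT : Valued.v T < 1 := by
    have h0 : IsLocalRing.residue (valRing k) (∑ i, ⟨u i, (hu i).le⟩ * (X i * X i)) = 0 := by
      simpa [hX] using hx'
    simpa [T] using (residue_eq_zero_iff_valuation_lt_one _).mp h0
  have hXj : Valued.v (X j : k) = 1 := valuation_eq_one_of_residue_ne_zero (by rwa [hX j])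
  have huj : u j ≠ 0 := fun h => by simpa [h] using hu j
  -- `b ≡ X j ^ 2` modulo the maximal ideal, and replacing `X j` by `√b` makes the form vanish.
  set b := (X j : k) ^ 2 - T / u j
  have hb : Valued.v ((X j : k) ^ 2 - b) < 1 := by
    rwa [sub_sub_cancel, map_div₀, hu j, div_one]
  obtain ⟨y, hy⟩ := Valued.exists_sq_eq_of_valuation_sq_sub_lt_one h2 hXj hb
  have hzero := h (Function.update (fun i => (X i : k)) j y) <| by
    rw [QuadraticMap.weightedSumSquares_update, ← sq, ← sq, hy]
    simp only [b, smul_eq_mul]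
    field_simp
    ring
  have hy0 : y = 0 := by simpa using congrFun hzero j
  rw [← hy, hy0] at hb
  simp [hXj] at hb

end Residue

theorem exists_coloring_sub_eq_two_smul {V ι : Type*} [AddCommGroup V] [Module ℚ V] [Finite ι]
    (a : ι → V) :
    ∃ (r : ℕ) (c : ι → Fin r → ZMod 2),
      r ≤ Module.finrank ℚ (Submodule.span ℚ (Set.range a)) ∧
      ∀ i j, c i = c j → ∃ z ∈ Submodule.span ℤ (Set.range a), a i - a j = (2 : ℤ) • z := by
  have := IsAddTorsionFree.of_module_rat V
  set M := Submodule.span ℤ (Set.range a)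
  have haM : ∀ i, a i ∈ M := fun i => Submodule.subset_span ⟨i, rfl⟩
  have : Module.Finite ℤ M := Module.Finite.span_of_finite ℤ (Set.finite_range a)
  let β := Module.Free.chooseBasis ℤ M
  let e := Fintype.equivFin (Module.Free.ChooseBasisIndex ℤ M)
  refine ⟨_, fun i p => (β.repr ⟨a i, haM i⟩ (e.symm p) : ZMod 2), ?_, fun i j hij => ?_⟩
  · have := FiniteDimensional.span_of_finite ℚ (Set.finite_range a)
    have hli : LinearIndependent ℚ fun b => (β b : V) :=
      (LinearIndependent.iff_fractionRing ℤ ℚ).mp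
        (β.linearIndependent.map' M.subtype (Submodule.ker_subtype M))
    have hmem : ∀ b, (β b : V) ∈ Submodule.span ℚ (Set.range a) :=
      fun b => Submodule.span_le_restrictScalars ℤ ℚ _ (β b).2
    have hli' : LinearIndependent ℚ fun b => (⟨β b, hmem b⟩ : Submodule.span ℚ (Set.range a)) :=
      LinearIndependent.of_comp (Submodule.span ℚ (Set.range a)).subtype hli
    simpa using hli'.fintype_card_le_finrank
  · have heven : ∀ b, (2 : ℤ) ∣ β.repr (⟨a i, haM i⟩ - ⟨a j, haM j⟩) b := by
      intro b
      have h2 : ((β.repr (⟨a i, haM i⟩ - ⟨a j, haM j⟩) b : ℤ) : ZMod 2) = 0 := by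
        rw [map_sub, Finsupp.sub_apply, Int.cast_sub, sub_eq_zero]
        simpa using congrFun hij (e b)
      exact_mod_cast (ZMod.intCast_zmod_eq_zero_iff_dvd _ 2).mp h2
    choose c hc using heven
    refine ⟨β.equivFun.symm c, (β.equivFun.symm c).2, ?_⟩
    have hsub : (⟨a i, haM i⟩ - ⟨a j, haM j⟩ : M) = (2 : ℤ) • β.equivFun.symm c :=
      β.equivFun.injective <| funext fun b => by
        rw [LinearEquiv.map_smul, LinearEquiv.apply_symm_apply, Module.Basis.equivFun_apply, hc b]
        simp
    simpa using congrArg Subtype.val hsub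

section ValueGroup

variable {k : Type} [Field k] [Valued k ℝ≥0]

lemma mem_logValueGroup {x : ℝ} :
    x ∈ logValueGroup k ↔ ∃ t : kˣ, Real.log (Valued.v (t : k) : ℝ≥0) = x := by
  simp [logValueGroup]

lemma valuation_unit_pos (t : kˣ) : (0 : ℝ) < (Valued.v (t : k) : ℝ≥0) :=
  NNReal.coe_pos.mpr (pos_iff_ne_zero.mpr ((Valuation.ne_zero_iff _).mpr t.ne_zero))

variable (k) in
def logValueSubgroup : AddSubgroup ℝ where
  carrier := logValueGroup k
  zero_mem' := mem_logValueGroup.mpr ⟨1, by simp⟩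
  add_mem' := by
    simp only [mem_logValueGroup]
    rintro _ _ ⟨t, rfl⟩ ⟨s, rfl⟩
    exact ⟨t * s, by
      simp [Real.log_mul (valuation_unit_pos t).ne' (valuation_unit_pos s).ne']⟩
  neg_mem' := by
    simp only [mem_logValueGroup]
    rintro _ ⟨t, rfl⟩
    exact ⟨t⁻¹, by simp [Real.log_inv]⟩

theorem exists_coloring_valuation_eq_mul_sq
    (hfin : FiniteDimensional ℚ (Submodule.span ℚ (logValueGroup k))) {ι : Type*} [Finite ι]
    (w : ι → kˣ) :
    ∃ (r : ℕ) (c : ι → Fin r → ZMod 2), r ≤ valRank k ∧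
      ∀ i j, c i = c j → ∃ t : kˣ, Valued.v (w i : k) = Valued.v (w j : k) * Valued.v (t : k) ^ 2 := by
  set a : ι → ℝ := fun i => Real.log (Valued.v (w i : k) : ℝ≥0)
  have ha : Set.range a ⊆ logValueGroup k := by
    rintro _ ⟨i, rfl⟩
    exact mem_logValueGroup.mpr ⟨w i, rfl⟩
  obtain ⟨r, c, hr, hc⟩ := exists_coloring_sub_eq_two_smul a
  refine ⟨r, c, hr.trans (Submodule.finrank_mono (Submodule.span_mono ha)), fun i j hij => ?_⟩
  obtain ⟨z, hz, hsub⟩ := hc i j hij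
  have hspan : Submodule.span ℤ (Set.range a) ≤ (logValueSubgroup k).toIntSubmodule :=
    Submodule.span_le.mpr ha
  obtain ⟨t, rfl⟩ := mem_logValueGroup.mp (hspan hz)
  refine ⟨t, NNReal.coe_injective (Real.log_injOn_pos (valuation_unit_pos (w i))
    (mul_pos (valuation_unit_pos (w j)) (pow_pos (valuation_unit_pos t) 2)) ?_)⟩
  push_cast
  rw [Real.log_mul (valuation_unit_pos (w j)).ne' (pow_pos (valuation_unit_pos t) 2).ne',
    Real.log_pow, Nat.cast_ofNat]
  simp only [a, zsmul_eq_mul, Int.cast_ofNat] at hsub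
  linear_combination hsub

end ValueGroup

section Bound

variable {k : Type} [Field k] [Valued k ℝ≥0] [CompleteSpace k] {m : ℝ}

theorem card_le_of_anisotropic_of_valuation_eq_mul_sq (h2 : Valued.v (2 : k) = 1)
    (hm : uInvLE (resF k) m) {ι : Type*} [Fintype ι] {w : ι → kˣ}
    (hw : (QuadraticMap.weightedSumSquares k fun i => (w i : k)).Anisotropic)
    (hsq : ∀ i j, ∃ t : kˣ, Valued.v (w i : k) = Valued.v (w j : k) * Valued.v (t : k) ^ 2) :
    (Fintype.card ι : ℝ) ≤ m := by
  rcases isEmpty_or_nonempty ι with hι | ⟨⟨j⟩⟩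
  · simpa using hm.nonneg
  choose t ht using fun i => hsq i j
  set u : ι → k := fun i => w i / (w j * t i ^ 2)
  have hu : ∀ i, Valued.v (u i) = 1 := fun i => by
    rw [map_div₀, map_mul, map_pow, ht i, div_self]
    simp
  have hwu : ∀ i, (w i : k) = w j * u i * t i ^ 2 := fun i => by
    simp only [u]
    field_simp
  have hu_aniso := hw.of_weightedSumSquares_eq_mul_sq (fun i => (t i).ne_zero) hwu
  exact hm.card_le (anisotropic_residue_of_anisotropic h2 hu hu_aniso)

theorem card_le_of_anisotropic (h2 : Valued.v (2 : k) = 1)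
    (hfin : FiniteDimensional ℚ (Submodule.span ℚ (logValueGroup k)))
    (hm : uInvLE (resF k) m) {ι : Type*} [Fintype ι] {w : ι → kˣ}
    (hw : (QuadraticMap.weightedSumSquares k fun i => (w i : k)).Anisotropic) :
    (Fintype.card ι : ℝ) ≤ 2 ^ valRank k * m := by
  classical
  obtain ⟨r, c, hr, hc⟩ := exists_coloring_valuation_eq_mul_sq hfin w
  have hfiber : ∀ s, (Fintype.card {i // c i = s} : ℝ) ≤ m := fun s =>
    card_le_of_anisotropic_of_valuation_eq_mul_sq h2 hm
      (hw.weightedSumSquares_comp Subtype.val_injective) fun i j => hc i j (i.2.trans j.2.symm)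
  have := hm.nonneg
  calc (Fintype.card ι : ℝ) = ∑ s : Fin r → ZMod 2, (Fintype.card {i // c i = s} : ℝ) := by
        rw [← Nat.cast_sum, ← Fintype.card_sigma, Fintype.card_congr (Equiv.sigmaFiberEquiv c)]
    _ ≤ ∑ _s : Fin r → ZMod 2, m := Finset.sum_le_sum fun s _ => hfiber s
    _ = 2 ^ r * m := by simp
    _ ≤ 2 ^ valRank k * m := by gcongr; norm_num

end Bound

/-- let `k` be a complete ultrametric field with `char k̃ ≠ 2` and
`dim_ℚ √|k*| = n` finite.  Then `u(k) ≤ 2^n · u(k̃)`:  if `u(k̃) ≤ m` then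
`u(k) ≤ 2^n · m`. -/
theorem stmt4 (k : Type) [Field k] [Valued k ℝ≥0] [CompleteSpace k] (n : ℕ)
    (hfin : FiniteDimensional ℚ (Submodule.span ℚ (logValueGroup k)))
    (hn : valRank k = n)
    (hchar : ringChar (resF k) ≠ 2)
    (m : ℝ) (hm : uInvLE (resF k) m) :
    uInvLE k (2 ^ n * m) := by
  rintro d ⟨q, hq⟩
  have h2 : Valued.v (2 : k) = 1 := valuation_two_eq_one hchar
  have : Invertible (2 : k) := invertibleOfNonzero fun h => by simp [h] at h2
  obtain ⟨w, hw⟩ := q.equivalent_weightedSumSquares_units_of_nondegenerate'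
    (QuadraticMap.separatingLeft_of_anisotropic q hq)
  simpa [hn] using card_le_of_anisotropic h2 hfin hm (hw.anisotropic hq)
end

section
/- Let k be a field of characteristic ≠ 2 and suppose every element of a finite list a₁,…,a_s ∈ k* can be written aᵢ = uᵢ·θ_{j(i)}·bᵢ² where the θ_j range over a fixed set of 2^n elements of k*, uᵢ lies in a fixed subgroup U of k*, and bᵢ ∈ k*. If s > 2^n·m and every diagonal quadratic form over k of dimension > m with coefficients in U is isotropic, then the quadratic form ⟨a₁,…,a_s⟩ is isotropic over k. -/
/-!
Sort the indices `i` by the `θ_{j(i)}` occurring in the decomposition of `aᵢ`. Since there are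
`s > 2^n m` indices and only `2^n` classes, some class `T` has more than `m` elements. The form
`⟨uᵢ : i ∈ T⟩` is isotropic by hypothesis, and `⟨aᵢ : i ∈ T⟩ = θ · ⟨uᵢ bᵢ²⟩` is similar to it, so it
is isotropic too; extending an isotropic vector on `T` by zero gives one for `⟨a₁,…,a_s⟩`.
-/

open Finset

def IsIsotropicDiag {k ι : Type*} [Field k] [Fintype ι] (c : ι → k) : Prop :=
  ∃ x : ι → k, x ≠ 0 ∧ ∑ i, c i * x i ^ 2 = 0

namespace IsIsotropicDiag

variable {k ι κ : Type*} [Field k] [Fintype ι] [Fintype κ]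

theorem of_comp_injective {c : ι → k} {f : κ → ι} (hf : f.Injective)
    (h : IsIsotropicDiag (c ∘ f)) : IsIsotropicDiag c := by
  classical
  obtain ⟨y, hy0, hy⟩ := h
  refine ⟨Function.extend f y 0, fun hx => hy0 ?_, ?_⟩
  · ext i
    simpa [hf.extend_apply] using congrFun hx (f i)
  · rw [← hy]
    refine (Fintype.sum_of_injective f hf _ _ ?_ fun i => ?_).symm
    · intro i hi
      simp [Function.extend_apply' _ _ _ hi]
    · simp [hf.extend_apply]

theorem mul_mul_sq {c b : ι → k} (h : IsIsotropicDiag c) (t : k) (hb : ∀ i, b i ≠ 0) :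
    IsIsotropicDiag fun i => c i * t * b i ^ 2 := by
  obtain ⟨y, hy0, hy⟩ := h
  refine ⟨fun i => y i / b i, fun hx => hy0 ?_, ?_⟩
  · ext i
    simpa [hb i] using congrFun hx i
  · calc ∑ i, c i * t * b i ^ 2 * (y i / b i) ^ 2 = t * ∑ i, c i * y i ^ 2 := by
          rw [mul_sum]
          refine sum_congr rfl fun i _ => ?_
          field_simp [hb i]
      _ = 0 := by rw [hy, mul_zero]

end IsIsotropicDiag

theorem stmt5_general (k : Type) [Field k]
    (n m s : ℕ) (U : Subgroup kˣ) (θ : Fin (2 ^ n) → kˣ)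
    (a : Fin s → kˣ)
    (hdec : ∀ i, ∃ u ∈ U, ∃ j : Fin (2 ^ n), ∃ b : kˣ, a i = u * θ j * b ^ 2)
    (hs : s > 2 ^ n * m)
    (hU : ∀ d : ℕ, d > m → ∀ c : Fin d → kˣ, (∀ i, c i ∈ U) →
      ∃ x : Fin d → k, x ≠ 0 ∧ ∑ i, (c i : k) * x i ^ 2 = 0) :
    ∃ x : Fin s → k, x ≠ 0 ∧ ∑ i, (a i : k) * x i ^ 2 = 0 := by
  choose u hu j b hab using hdec
  obtain ⟨j₀, hT⟩ := Fintype.exists_lt_card_fiber_of_mul_lt_card j (n := m) (by simpa using hs)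
  set T := ({i | j i = j₀} : Finset (Fin s))
  let emb := T.orderEmbOfFin rfl
  have hj : ∀ q, j (emb q) = j₀ := fun q => (mem_filter.mp (T.orderEmbOfFin_mem rfl q)).2
  have hu_iso : IsIsotropicDiag fun q => (u (emb q) : k) := hU _ hT _ fun q => hu _
  have ha_iso : IsIsotropicDiag fun q => (a (emb q) : k) := by
    convert hu_iso.mul_mul_sq (θ j₀) (fun q => (b (emb q)).ne_zero) using 2 with q
    simp [hab, hj]
  exact ha_iso.of_comp_injective (f := emb) emb.injective

/-- pigeonhole/decomposition step: let `k` be a field of characteristic ≠ 2,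
`U ≤ k*` a subgroup, `θ₁,…,θ_{2^n} ∈ k*`.  Suppose each `aᵢ = uᵢ·θ_{j(i)}·bᵢ²` with
`uᵢ ∈ U`, `bᵢ ∈ k*`.  If `s > 2^n·m` and every diagonal quadratic form over `k` of
dimension `> m` with coefficients in `U` is isotropic, then `⟨a₁,…,a_s⟩` is isotropic. -/
theorem stmt5 (k : Type) [Field k] (h2 : (2 : k) ≠ 0)
    (n m s : ℕ) (hm : 0 < m) (U : Subgroup kˣ) (θ : Fin (2 ^ n) → kˣ)
    (a : Fin s → kˣ)
    (hdec : ∀ i, ∃ u ∈ U, ∃ j : Fin (2 ^ n), ∃ b : kˣ, a i = u * θ j * b ^ 2)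
    (hs : s > 2 ^ n * m)
    (hU : ∀ d : ℕ, d > m → ∀ c : Fin d → kˣ, (∀ i, c i ∈ U) →
      ∃ x : Fin d → k, x ≠ 0 ∧ ∑ i, (c i : k) * x i ^ 2 = 0) :
    ∃ x : Fin s → k, x ≠ 0 ∧ ∑ i, (a i : k) * x i ^ 2 = 0 :=
  stmt5_general k n m s U θ a hdec hs hU
end

section
/- Let F be a complete discretely valued field whose residue field F̃ has characteristic ≠ 2. Then u(F) = 2·u(F̃) (Springer's theorem for complete nondyadic discretely valued fields). -/
/-!
Since `2` is invertible, every form is diagonal, and rescaling each coefficient by a square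
makes it a unit or a uniformizer `ϖ` times a unit: an anisotropic form over `F` is
`⟨u₁, …, uₘ⟩ ⊥ ϖ⟨v₁, …, vₙ⟩` with units `uᵢ, vⱼ`. If one of the residue forms `⟨ūᵢ⟩`, `⟨v̄ⱼ⟩`
had a nontrivial zero, Hensel's lemma would lift it to a zero over `F`; so both are anisotropic
and `u(F) ≤ 2 u(F̃)`. Conversely, if `⟨ūᵢ⟩` and `⟨v̄ⱼ⟩` are anisotropic then so is
`⟨u⟩ ⊥ ϖ⟨v⟩`: reducing a primitive zero modulo `ϖ` forces its first block, then (after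
cancelling `ϖ`) its second block, into the maximal ideal. Hence `u(F) ≥ 2 u(F̃)`.
-/

/-- The `u`-invariant of a field: the supremum of dimensions of anisotropic quadratic
forms over it (as an extended natural number). -/
noncomputable def uInv (K : Type) [Field K] : ℕ∞ :=
  ⨆ (d : ℕ) (_ : ∃ q : QuadraticForm K (Fin d → K), q.Anisotropic), (d : ℕ∞)

open Finset IsLocalRing

def DiagonalAnisotropic {R ι : Type*} [CommSemiring R] [Fintype ι] (w : ι → R) : Prop :=
  ∀ x : ι → R, ∑ i, w i * x i ^ 2 = 0 → x = 0

namespace DiagonalAnisotropic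

variable {R ι κ : Type*} [Fintype ι] [Fintype κ]

section CommSemiring

variable [CommSemiring R] {w : ι → R}

theorem comp (h : DiagonalAnisotropic w) {f : κ → ι} (hf : f.Injective) :
    DiagonalAnisotropic (w ∘ f) := by
  intro x hx
  let y : ι → R := Function.extend f x 0
  have hy : ∑ i, w i * y i ^ 2 = 0 := by
    rw [← sum_subset (subset_univ (univ.map ⟨f, hf⟩)) fun i _ hi => ?_, sum_map]
    · simpa [y, hf.extend_apply] using hx
    · simp only [mem_map, mem_univ, true_and, Function.Embedding.coeFn_mk, not_exists] at hi
      simp [y, Function.extend_apply' _ _ _ fun ⟨k, hk⟩ => hi k hk]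
  ext k
  simpa [y, hf.extend_apply] using congrFun (h y hy) (f k)

theorem of_mul_left {c : R} (h : DiagonalAnisotropic fun i => c * w i) :
    DiagonalAnisotropic w := fun x hx =>
  h x (by simp_rw [mul_assoc, ← mul_sum, hx, mul_zero])

theorem ne_zero [Nontrivial R] (h : DiagonalAnisotropic w) (i : ι) : w i ≠ 0 := by
  classical
  intro hi
  have hsum : ∑ j, w j * Pi.single (M := fun _ => R) i 1 j ^ 2 = 0 := by
    rw [Fintype.sum_eq_single i fun j hj => by simp [hj]]
    simp [hi]
  simpa using congrFun (h _ hsum) i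

end CommSemiring

theorem of_mul_sq {K : Type*} [Field K] {w c : ι → K}
    (h : DiagonalAnisotropic fun i => w i * c i ^ 2) (hc : ∀ i, c i ≠ 0) :
    DiagonalAnisotropic w := by
  intro x hx
  have h0 : (fun i => x i / c i) = 0 := h _ <| by
    rw [← hx]
    refine sum_congr rfl fun i _ => ?_
    field_simp [hc i]
  ext i
  simpa [hc i] using congrFun h0 i

end DiagonalAnisotropic

theorem QuadraticMap.anisotropic_weightedSumSquares_iff {R ι : Type*} [CommSemiring R] [Fintype ι]
    (w : ι → R) : (weightedSumSquares R w).Anisotropic ↔ DiagonalAnisotropic w := by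
  simp only [Anisotropic, DiagonalAnisotropic, weightedSumSquares_apply, smul_eq_mul, ← pow_two]

theorem exists_anisotropic_iff_exists_diagonalAnisotropic {K : Type*} [Field K]
    (h2 : (2 : K) ≠ 0) (d : ℕ) :
    (∃ q : QuadraticForm K (Fin d → K), q.Anisotropic) ↔
      ∃ w : Fin d → K, DiagonalAnisotropic w := by
  let _ : Invertible (2 : K) := invertibleOfNonzero h2
  constructor
  · rintro ⟨q, hq⟩
    obtain ⟨w, ⟨f⟩⟩ := q.equivalent_weightedSumSquares
    have hw : DiagonalAnisotropic w := by
      rw [← QuadraticMap.anisotropic_weightedSumSquares_iff]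
      intro x hx
      rw [← f.apply_symm_apply x, hq (f.symm x) (by rwa [f.symm.map_app]), map_zero]
    exact ⟨_, hw.comp (finCongr (Module.finrank_fin_fun K)).symm.injective⟩
  · rintro ⟨w, hw⟩
    exact ⟨_, (QuadraticMap.anisotropic_weightedSumSquares_iff w).mpr hw⟩

theorem iSup_natCast_eq_two_mul_iSup {P Q : ℕ → Prop}
    (hP : ∀ d, P d → ∃ m n, Q m ∧ Q n ∧ m + n = d) (hQ : ∀ n, Q n → P (n + n)) :
    ⨆ (d : ℕ) (_ : P d), (d : ℕ∞) = 2 * ⨆ (n : ℕ) (_ : Q n), (n : ℕ∞) := by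
  apply le_antisymm
  · refine iSup₂_le fun d hd => ?_
    obtain ⟨m, n, hm, hn, rfl⟩ := hP d hd
    rw [two_mul, Nat.cast_add]
    exact add_le_add (le_iSup₂ (f := fun n (_ : Q n) => (n : ℕ∞)) m hm)
      (le_iSup₂ (f := fun n (_ : Q n) => (n : ℕ∞)) n hn)
  · simp_rw [ENat.mul_iSup]
    refine iSup₂_le fun n hn => ?_
    rw [two_mul, ← Nat.cast_add]
    exact le_iSup₂ (f := fun d (_ : P d) => (d : ℕ∞)) (n + n) (hQ n hn)

section IsLocalRing

open Polynomial

variable {R ι : Type*} [CommRing R] [IsLocalRing R] [Fintype ι]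

theorem DiagonalAnisotropic.forall_mem_maximalIdeal {u y : ι → R}
    (hu : DiagonalAnisotropic fun i => residue R (u i))
    (hy : ∑ i, u i * y i ^ 2 ∈ maximalIdeal R) (i : ι) : y i ∈ maximalIdeal R := by
  rw [← residue_eq_zero_iff] at hy ⊢
  exact congrFun (hu (fun i => residue R (y i)) (by simpa using hy)) i

theorem isSquare_of_isSquare_residue [HenselianRing R (maximalIdeal R)] (h2 : IsUnit (2 : R))
    {s : R} (hs : IsUnit s) (h : IsSquare (residue R s)) : IsSquare s := by
  obtain ⟨t, ht⟩ := h
  obtain ⟨a, rfl⟩ := residue_surjective t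
  have ha : IsUnit a := by
    rw [← residue_ne_zero_iff_isUnit]
    rintro h0
    exact (residue_ne_zero_iff_isUnit s).mpr hs (by rw [ht, h0, mul_zero])
  have hd : (X ^ 2 - C s).derivative.eval a = 2 * a := by simp; ring
  obtain ⟨b, hb, -⟩ := HenselianRing.is_henselian (I := maximalIdeal R) (X ^ 2 - C s)
    (monic_X_pow_sub_C s two_ne_zero) a (by rw [← residue_eq_zero_iff]; simp [ht, sq])
    (by rw [hd]; exact (h2.mul ha).map _)
  exact ⟨b, by simpa [sub_eq_zero, sq, eq_comm] using hb⟩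

theorem DiagonalAnisotropic.residue_of_algebraMap [HenselianRing R (maximalIdeal R)]
    {K : Type*} [Field K] [Algebra R K] (h2 : IsUnit (2 : R)) {u : ι → R}
    (hu : ∀ i, IsUnit (u i)) (h : DiagonalAnisotropic fun i => algebraMap R K (u i)) :
    DiagonalAnisotropic fun i => residue R (u i) := by
  classical
  intro x hx
  by_contra hx0
  obtain ⟨j, hj⟩ := Function.ne_iff.mp hx0
  choose a ha using fun i => residue_surjective (x i)
  obtain ⟨v, hv⟩ := (hu j).exists_left_inv
  set T := ∑ i ∈ univ.erase j, u i * a i ^ 2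
  -- Hensel's lemma will replace `a j` by a root `b` of `u j * b ^ 2 + T = 0`.
  have hres : residue R (-v * T) = x j ^ 2 := by
    have hx' : residue R (u j) * x j ^ 2 + residue R T = 0 := by
      rw [← add_sum_erase _ _ (mem_univ j)] at hx
      simpa [T, ha] using hx
    have hvu : residue R v * residue R (u j) = 1 := by rw [← map_mul, hv, map_one]
    rw [map_mul, map_neg]
    linear_combination (-residue R v) * hx' + x j ^ 2 * hvu
  have hsu : IsUnit (-v * T) := by
    rw [← residue_ne_zero_iff_isUnit, hres]; exact pow_ne_zero 2 hj
  obtain ⟨b, hb⟩ := isSquare_of_isSquare_residue h2 hsu ⟨x j, by rw [hres, sq]⟩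
  have hbu : IsUnit b := isUnit_of_mul_isUnit_left (hb ▸ hsu)
  have hz : ∑ i, u i * Function.update a j b i ^ 2 = 0 := by
    rw [← add_sum_erase _ _ (mem_univ j), Function.update_self,
      sum_congr rfl fun i hi => by rw [Function.update_of_ne (ne_of_mem_erase hi)]]
    linear_combination -u j * hb - T * hv
  have hzj := congrFun (h (fun i => algebraMap R K (Function.update a j b i))
    (by simpa using congrArg (algebraMap R K) hz)) j
  rw [Function.update_self] at hzj
  exact (hbu.map (algebraMap R K)).ne_zero hzj

end IsLocalRing

section ValuationRing

variable {A K ι : Type*} [CommRing A] [IsDomain A] [ValuationRing A] [Field K] [Algebra A K]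
  [IsFractionRing A K] [Fintype ι]

theorem ValuationRing.exists_forall_algebraMap_eq_div {x : ι → K} (hx : x ≠ 0) :
    ∃ j, x j ≠ 0 ∧ ∀ i, ∃ a : A, algebraMap A K a = x i / x j := by
  let v := ValuationRing.valuation A K
  obtain ⟨i₀, hi₀⟩ := Function.ne_iff.mp hx
  obtain ⟨j, -, hj⟩ := exists_max_image univ (fun i => v (x i)) ⟨i₀, mem_univ i₀⟩
  have hvj : 0 < v (x j) := (v.pos_iff.mpr hi₀).trans_le (hj i₀ (mem_univ i₀))
  refine ⟨j, v.pos_iff.mp hvj, fun i => (ValuationRing.mem_integer_iff A K _).mp ?_⟩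
  rw [Valuation.mem_integer_iff, map_div₀, div_le_one₀ hvj]
  exact hj i (mem_univ i)

theorem DiagonalAnisotropic.algebraMap_of_forall_mem_maximalIdeal {w : ι → A}
    (h : ∀ y : ι → A, ∑ i, w i * y i ^ 2 = 0 → ∀ i, y i ∈ maximalIdeal A) :
    DiagonalAnisotropic fun i => algebraMap A K (w i) := by
  intro x hx
  by_contra hx0
  obtain ⟨j, hxj, hy⟩ := ValuationRing.exists_forall_algebraMap_eq_div (A := A) hx0
  choose y hy using hy
  have hyj : y j = 1 := IsFractionRing.injective A K (by rw [hy, div_self hxj, map_one])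
  have hsum : ∑ i, w i * y i ^ 2 = 0 := IsFractionRing.injective A K <| by
    simp only [map_sum, map_mul, map_pow, hy, div_pow, ← mul_div_assoc, ← sum_div, hx,
      zero_div, map_zero]
  exact notMem_maximalIdeal.mpr isUnit_one (hyj ▸ h y hsum j)

end ValuationRing

section IsDiscreteValuationRing

variable {R K ι κ : Type*} [CommRing R] [IsDomain R] [IsDiscreteValuationRing R] [Field K]
  [Algebra R K] [IsFractionRing R K] [Fintype ι] [Fintype κ] {ϖ : R}

theorem DiagonalAnisotropic.algebraMap_sumElim_of_irreducible {u : ι → R} {v : κ → R}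
    (hϖ : Irreducible ϖ) (hu : DiagonalAnisotropic fun i => residue R (u i))
    (hv : DiagonalAnisotropic fun i => residue R (v i)) :
    DiagonalAnisotropic fun i => algebraMap R K (Sum.elim u (fun i => ϖ * v i) i) := by
  refine DiagonalAnisotropic.algebraMap_of_forall_mem_maximalIdeal fun y hy => ?_
  replace hy : ∑ i, u i * y (.inl i) ^ 2 + ϖ * ∑ i, v i * y (.inr i) ^ 2 = 0 := by
    simpa [Fintype.sum_sum_type, mul_sum, mul_assoc] using hy
  have hm : maximalIdeal R = Ideal.span {ϖ} := hϖ.maximalIdeal_eq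
  have hl : ∀ i, y (.inl i) ∈ maximalIdeal R := hu.forall_mem_maximalIdeal <| by
    rw [hm, Ideal.mem_span_singleton]
    exact ⟨-∑ i, v i * y (.inr i) ^ 2, by linear_combination hy⟩
  choose s hs using fun i => Ideal.mem_span_singleton.mp (hm ▸ hl i)
  -- After substituting `y (.inl i) = ϖ * s i`, cancelling one `ϖ` exposes the `v`-block mod `ϖ`.
  have hy' : ϖ * (ϖ * ∑ i, u i * s i ^ 2 + ∑ i, v i * y (.inr i) ^ 2) = 0 := by
    rw [← hy]; simp only [hs, mul_add, mul_sum]; congr 1; exact sum_congr rfl fun i _ => by ring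
  have hr : ∀ i, y (.inr i) ∈ maximalIdeal R := hv.forall_mem_maximalIdeal <| by
    rw [hm, Ideal.mem_span_singleton]
    exact ⟨-∑ i, u i * s i ^ 2,
      by linear_combination (mul_eq_zero.mp hy').resolve_left hϖ.ne_zero⟩
  rintro (i | i)
  exacts [hl i, hr i]

theorem exists_units_mul_sq_of_irreducible (hϖ : Irreducible ϖ) {x : K} (hx : x ≠ 0) :
    ∃ (u : Rˣ) (c : K), c ≠ 0 ∧
      (x = algebraMap R K u * c ^ 2 ∨ x = algebraMap R K ϖ * algebraMap R K u * c ^ 2) := by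
  obtain ⟨n, u, rfl⟩ := IsDiscreteValuationRing.exists_units_eq_smul_zpow_of_irreducible hϖ hx
  have hϖK : algebraMap R K ϖ ≠ 0 := by simpa using hϖ.ne_zero
  refine ⟨u, ?_⟩
  obtain ⟨k, rfl | rfl⟩ := Int.even_or_odd' n
  · refine ⟨algebraMap R K ϖ ^ k, zpow_ne_zero k hϖK, .inl ?_⟩
    rw [Units.smul_def, Algebra.smul_def, mul_comm 2 k, zpow_mul, zpow_two, sq]
  · refine ⟨algebraMap R K ϖ ^ k, zpow_ne_zero k hϖK, .inr ?_⟩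
    rw [Units.smul_def, Algebra.smul_def, zpow_add_one₀ hϖK, mul_comm 2 k, zpow_mul, zpow_two, sq]
    ring

open Classical in
theorem DiagonalAnisotropic.exists_residue_split [HenselianRing R (maximalIdeal R)]
    (h2 : IsUnit (2 : R)) {w : ι → K} (hw : DiagonalAnisotropic w) :
    ∃ (p : ι → Prop) (u : ι → R), (DiagonalAnisotropic fun i : {i // p i} => residue R (u i)) ∧
      DiagonalAnisotropic fun i : {i // ¬p i} => residue R (u i) := by
  obtain ⟨ϖ, hϖ⟩ := IsDiscreteValuationRing.exists_irreducible R
  choose u c hc hwu using fun i => exists_units_mul_sq_of_irreducible hϖ (hw.ne_zero i)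
  let p i := w i = algebraMap R K (u i) * c i ^ 2
  refine ⟨p, fun i => u i, ?_, ?_⟩
  · have hp : DiagonalAnisotropic fun i : {i // p i} => algebraMap R K (u i) * c i ^ 2 := by
      convert hw.comp (Subtype.val_injective (p := p)) using 1
      exact funext fun i => i.2.symm
    exact (hp.of_mul_sq fun i => hc i).residue_of_algebraMap h2 fun i => (u i).isUnit
  · have hp : DiagonalAnisotropic fun i : {i // ¬p i} =>
        algebraMap R K ϖ * algebraMap R K (u i) * c i ^ 2 := by
      convert hw.comp (Subtype.val_injective (p := (¬p ·))) using 1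
      exact funext fun i => ((hwu i).resolve_left i.2).symm
    exact (hp.of_mul_sq fun i => hc i).of_mul_left.residue_of_algebraMap h2 fun i => (u i).isUnit

theorem DiagonalAnisotropic.exists_fin_residue_split [HenselianRing R (maximalIdeal R)]
    (h2 : IsUnit (2 : R)) {d : ℕ} {w : Fin d → K} (hw : DiagonalAnisotropic w) :
    ∃ m n, (∃ w₁ : Fin m → ResidueField R, DiagonalAnisotropic w₁) ∧
      (∃ w₂ : Fin n → ResidueField R, DiagonalAnisotropic w₂) ∧ m + n = d := by
  classical
  obtain ⟨p, u, h₁, h₂⟩ := hw.exists_residue_split h2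
  refine ⟨_, _, ⟨_, h₁.comp (Fintype.equivFin _).symm.injective⟩,
    ⟨_, h₂.comp (Fintype.equivFin _).symm.injective⟩, ?_⟩
  simpa using Fintype.card_congr (Equiv.sumCompl p)

theorem DiagonalAnisotropic.exists_fin_add_of_residue {m n : ℕ} {w₁ : Fin m → ResidueField R}
    {w₂ : Fin n → ResidueField R} (h₁ : DiagonalAnisotropic w₁) (h₂ : DiagonalAnisotropic w₂) :
    ∃ w : Fin (m + n) → K, DiagonalAnisotropic w := by
  obtain ⟨ϖ, hϖ⟩ := IsDiscreteValuationRing.exists_irreducible R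
  choose u hu using fun i => residue_surjective (w₁ i)
  choose v hv using fun i => residue_surjective (w₂ i)
  rw [← funext hu] at h₁
  rw [← funext hv] at h₂
  exact ⟨_, (h₁.algebraMap_sumElim_of_irreducible (K := K) hϖ h₂).comp
    finSumFinEquiv.symm.injective⟩

end IsDiscreteValuationRing

/-- Springer: let `F` be a complete discretely valued field (the fraction
field of a complete discrete valuation ring `R`) with residue field `F̃` of
characteristic ≠ 2.  Then `u(F) = 2 · u(F̃)`. -/
theorem stmt13 (R : Type) [CommRing R] [IsDomain R] [IsDiscreteValuationRing R]
    [IsAdicComplete (IsLocalRing.maximalIdeal R) R]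
    (hchar : ringChar (IsLocalRing.ResidueField R) ≠ 2) :
    uInv (FractionRing R) = 2 * uInv (IsLocalRing.ResidueField R) := by
  have h2k : (2 : ResidueField R) ≠ 0 := Ring.two_ne_zero hchar
  have h2 : IsUnit (2 : R) := (residue_ne_zero_iff_isUnit 2).mp (by rwa [map_ofNat])
  have h2F : (2 : FractionRing R) ≠ 0 := by
    rw [← map_ofNat (algebraMap R _) 2]
    exact (h2.map _).ne_zero
  simp only [uInv, exists_anisotropic_iff_exists_diagonalAnisotropic h2F,
    exists_anisotropic_iff_exists_diagonalAnisotropic h2k]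
  refine iSup_natCast_eq_two_mul_iSup (fun d ⟨w, hw⟩ => ?_) fun n ⟨w, hw⟩ => ?_
  · exact hw.exists_fin_residue_split h2
  · exact hw.exists_fin_add_of_residue hw
end
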